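/- Let q be a self-join-free Boolean conjunctive query. If the attack graph of q contains a directed cycle, then it contains a directed cycle of length two (i.e., there exist distinct atoms F, G with F attacks G and G attacks F). -/

import Mathlib

/-- A fact `R(a₁,…,aₙ)`: relation name, primary-key values, non-key values. -/
structure DBFact where
  rel : ℕ
  key : List ℕ
  rest : List ℕ
deriving DecidableEq

/-- Two facts are key-equal if they have the same relation name and primary-key value. -/
def keyEq (A B : DBFact) : Prop := A.rel = B.rel ∧ A.key = B.key

instance (A B : DBFact) : Decidable (keyEq A B) :=
  inferInstanceAs (Decidable (_ ∧ _))

/-- A set of facts is consistent if it contains no two distinct key-equal facts. -/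
def Consistent (s : Finset DBFact) : Prop := ∀ A ∈ s, ∀ B ∈ s, keyEq A B → A = B

/-- A repair of `db` is a maximal (w.r.t. ⊆) consistent subset of `db`. -/
def Repair (db r : Finset DBFact) : Prop :=
  r ⊆ db ∧ Consistent r ∧ ∀ r', r' ⊆ db → Consistent r' → r ⊆ r' → r = r'

/-- A term is a variable (inl) or a constant (inr). -/
abbrev Term := ℕ ⊕ ℕ

/-- An atom `R(t₁,…,tₙ)` with key positions and non-key positions. -/
structure Atom where
  rel : ℕ
  key : List Term
  rest : List Term
deriving DecidableEq

def termVars (l : List Term) : Finset ℕ := (l.filterMap fun t => t.getLeft?).toFinset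

/-- Variables at primary-key positions of an atom. -/
def keyVars (F : Atom) : Finset ℕ := termVars F.key

/-- All variables of an atom. -/
def atomVars (F : Atom) : Finset ℕ := termVars F.key ∪ termVars F.rest

/-- A query (finite set of atoms) is self-join-free: no relation name occurs twice. -/
def SJF (q : Finset Atom) : Prop := ∀ F ∈ q, ∀ G ∈ q, F.rel = G.rel → F = G

/-- Apply a valuation (total map from variables to constants) to an atom, yielding a fact. -/
def applyVal (θ : ℕ → ℕ) (F : Atom) : DBFact :=
  ⟨F.rel, F.key.map (Sum.elim θ id), F.rest.map (Sum.elim θ id)⟩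

/-- Semantic implication of a functional dependency `X → Y` by a set of FDs
(two-tuple semantics, which is equivalent to the standard one for FDs). -/
def FDImplies (fds : Set (Set ℕ × Set ℕ)) (X Y : Set ℕ) : Prop :=
  ∀ θ μ : ℕ → ℕ,
    (∀ p ∈ fds, (∀ v ∈ p.1, θ v = μ v) → ∀ v ∈ p.2, θ v = μ v) →
    (∀ v ∈ X, θ v = μ v) → ∀ v ∈ Y, θ v = μ v

/-- `FD(q) = { key(F) → vars(F) : F ∈ q }`. -/
def FDs (q : Finset Atom) : Set (Set ℕ × Set ℕ) :=
  {p | ∃ F ∈ q, p = ((keyVars F : Set ℕ), (atomVars F : Set ℕ))}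

/-- `F⁺ = { x : FD(q \ {F}) ⊨ key(F) → x }`. -/
def plus (q : Finset Atom) (F : Atom) : Set ℕ :=
  {x | FDImplies (FDs (q.erase F)) (keyVars F : Set ℕ) {x}}

/-- One step of a witness for an attack by `F`: consecutive atoms share a variable outside `F⁺`. -/
def AttackStep (q : Finset Atom) (F : Atom) (A B : Atom) : Prop :=
  ¬ ((atomVars A ∩ atomVars B : Finset ℕ) : Set ℕ) ⊆ plus q F

/-- `F` attacks `G` in the attack graph of `q`. -/
def Attacks (q : Finset Atom) (F G : Atom) : Prop :=
  F ≠ G ∧ F ∈ q ∧ ∃ L : List Atom, (∀ A ∈ L, A ∈ q) ∧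
    List.Chain (AttackStep q F) F L ∧ (F :: L).getLast (List.cons_ne_nil F L) = G

/-- `F` attacks the variable `z`. -/
def AttacksVar (q : Finset Atom) (F : Atom) (z : ℕ) : Prop :=
  z ∉ plus q F ∧ F ∈ q ∧ ∃ L : List Atom, (∀ A ∈ L, A ∈ q) ∧
    List.Chain (AttackStep q F) F L ∧ z ∈ atomVars ((F :: L).getLast (List.cons_ne_nil F L))

/-- `r ⊨ ζ(q)` for a valuation `ζ` over the variable set `X`. -/
def Sat (r : Finset DBFact) (q : Finset Atom) (X : Finset ℕ) (ζ : ℕ → ℕ) : Prop :=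
  ∃ θ : ℕ → ℕ, (∀ v ∈ X, θ v = ζ v) ∧ ∀ F ∈ q, applyVal θ F ∈ r

/-- `r ⊨ q`. -/
def Sat0 (r : Finset DBFact) (q : Finset Atom) : Prop :=
  ∃ θ : ℕ → ℕ, ∀ F ∈ q, applyVal θ F ∈ r

/-- A fact `A` is relevant for `q` in `r` if `A ∈ θ(q) ⊆ r` for some valuation `θ`. -/
def Relevant (A : DBFact) (q : Finset Atom) (r : Finset DBFact) : Prop :=
  ∃ θ : ℕ → ℕ, (∃ F ∈ q, applyVal θ F = A) ∧ ∀ F ∈ q, applyVal θ F ∈ r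

/-!
If `F` attacks `G` and `G` attacks `H` but `F` does not attack `H`, then some step of `G`'s
witness path towards `H` shares only variables of `F⁺`, so `G` attacks a variable of `F⁺`.
Following the derivation of that variable from `key(F)` backwards, `G` attacks ever earlier
key variables until it reaches `key(F)`, hence `F` itself. The derivation cannot pass through
`G`: then `vars(G) ⊆ F⁺`, which rules out `F` attacking `G`. This gives the transitivity-like
property, and along any cycle it turns the first attack into a shortcut until a pair of
mutually attacking atoms appears.
-/

section TransGen

variable {α : Type*} {r : α → α → Prop}

theorem exists_rel_and_rel_of_transGen_self
    (htrans : ∀ {a b c}, r a b → r b c → r a c ∨ r b a) {a : α}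
    (h : Relation.TransGen r a a) :
    ∃ b c, r b c ∧ r c b := by
  suffices H : ∀ {c}, Relation.TransGen r a c → (∃ b c, r b c ∧ r c b) ∨ r a c by
    exact (H h).elim id fun haa => ⟨a, a, haa, haa⟩
  intro c hac
  induction hac with
  | single hab => exact .inr hab
  | @tail b c _ hbc ih =>
    rcases ih with hcycle | hab
    · exact .inl hcycle
    · exact (htrans hab hbc).elim .inr fun hba => .inl ⟨a, b, hab, hba⟩

end TransGen

section Plus

variable {q : Finset Atom} {F : Atom}

theorem keyVars_subset_plus {x : ℕ} (hx : x ∈ keyVars F) : x ∈ plus q F :=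
  fun _ _ _ hkey _ hv => (Set.mem_singleton_iff.1 hv) ▸ hkey x hx

theorem atomVars_subset_plus {B : Atom} (hB : B ∈ q.erase F)
    (hkey : ∀ y ∈ keyVars B, y ∈ plus q F) {x : ℕ} (hx : x ∈ atomVars B) : x ∈ plus q F := by
  intro θ μ hfd hkeyF _ hv
  rw [Set.mem_singleton_iff.1 hv]
  exact hfd _ ⟨B, hB, rfl⟩ (fun y hy => hkey y hy θ μ hfd hkeyF y rfl) x hx

theorem plus_induction {P : ℕ → Prop} (base : ∀ x ∈ keyVars F, P x)
    (step : ∀ B ∈ q.erase F, (∀ y ∈ keyVars B, P y) → ∀ x ∈ atomVars B, P x)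
    {x : ℕ} (hx : x ∈ plus q F) : P x := by
  classical
  -- The valuations below agree exactly on `P`, so the FD premise is the closure property of `P`.
  have := hx (fun _ => 0) (fun v => if P v then 0 else 1) ?_ ?_ x rfl
  · by_contra hPx
    simp [hPx] at this
  · rintro _ ⟨B, hB, rfl⟩ hagree v hv
    have hPkey : ∀ y ∈ keyVars B, P y := fun y hy => by
      by_contra hPy
      simpa [hPy] using hagree y hy
    simp [step B hB hPkey v hv]
  · intro v hv
    simp [base v hv]

end Plus

/-- `ReflTransGen (WitnessStep q F) F A` repackages the witness lists in `Attacks q F`. -/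
def WitnessStep (q : Finset Atom) (F A B : Atom) : Prop := B ∈ q ∧ AttackStep q F A B

section Witness

variable {q : Finset Atom} {F G : Atom}

theorem isChain_witnessStep_iff {a : Atom} {L : List Atom} :
    List.IsChain (WitnessStep q F) (a :: L) ↔
      (∀ A ∈ L, A ∈ q) ∧ List.IsChain (AttackStep q F) (a :: L) := by
  induction L generalizing a with
  | nil => simp
  | cons b L ih =>
    simp only [List.isChain_cons_cons, ih, WitnessStep, List.forall_mem_cons]
    tauto

theorem exists_witness_iff {P : Atom → Prop} :
    (∃ L : List Atom, (∀ A ∈ L, A ∈ q) ∧ List.IsChain (AttackStep q F) (F :: L) ∧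
        P ((F :: L).getLast (List.cons_ne_nil F L))) ↔
      ∃ A, Relation.ReflTransGen (WitnessStep q F) F A ∧ P A := by
  constructor
  · rintro ⟨L, hmem, hchain, hP⟩
    exact ⟨_, List.relationReflTransGen_of_exists_isChain_cons L
      (isChain_witnessStep_iff.2 ⟨hmem, hchain⟩) rfl, hP⟩
  · rintro ⟨A, hFA, hP⟩
    obtain ⟨L, hchain, hlast⟩ := List.exists_isChain_cons_of_relationReflTransGen hFA
    exact ⟨L, (isChain_witnessStep_iff.1 hchain).1, (isChain_witnessStep_iff.1 hchain).2,
      hlast ▸ hP⟩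

theorem attacks_iff :
    Attacks q F G ↔ F ≠ G ∧ F ∈ q ∧ Relation.ReflTransGen (WitnessStep q F) F G :=
  and_congr_right fun _ => and_congr_right fun _ =>
    (exists_witness_iff (P := (· = G))).trans exists_eq_right

theorem attacksVar_iff {z : ℕ} :
    AttacksVar q F z ↔ z ∉ plus q F ∧ F ∈ q ∧
      ∃ A, Relation.ReflTransGen (WitnessStep q F) F A ∧ z ∈ atomVars A :=
  and_congr_right fun _ => and_congr_right fun _ =>
    exists_witness_iff (P := fun A => z ∈ atomVars A)

theorem witnessStep_of_mem {A B : Atom} {x : ℕ} (hB : B ∈ q) (hxA : x ∈ atomVars A)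
    (hxB : x ∈ atomVars B) (hx : x ∉ plus q F) : WitnessStep q F A B :=
  ⟨hB, fun hsub => hx (hsub (by simp [hxA, hxB]))⟩

theorem exists_mem_atomVars_not_mem_plus_of_attacks (h : Attacks q F G) :
    ∃ x ∈ atomVars G, x ∉ plus q F := by
  obtain ⟨hne, -, hFG⟩ := attacks_iff.1 h
  obtain rfl | ⟨A, -, -, hAG⟩ := hFG.cases_tail
  · exact absurd rfl hne
  · obtain ⟨x, hx, hxF⟩ := Set.not_subset.1 hAG
    exact ⟨x, (Finset.mem_inter.1 hx).2, hxF⟩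

theorem attacksVar_of_reflTransGen {A : Atom} {z : ℕ} (hG : G ∈ q)
    (hGA : Relation.ReflTransGen (WitnessStep q G) G A) (hz : z ∈ atomVars A)
    (hzG : z ∉ plus q G) : AttacksVar q G z :=
  attacksVar_iff.2 ⟨hzG, hG, A, hGA, hz⟩

theorem attacks_of_attacksVar_of_mem_plus (hFG : Attacks q F G) {x : ℕ}
    (hx : x ∈ plus q F) (hGx : AttacksVar q G x) : Attacks q G F := by
  obtain ⟨hne, hF, -⟩ := attacks_iff.1 hFG
  suffices H : x ∈ plus q F ∧ (AttacksVar q G x → Attacks q G F) from H.2 hGx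
  refine plus_induction (P := fun y => y ∈ plus q F ∧ (AttacksVar q G y → Attacks q G F))
    (fun y hy => ⟨keyVars_subset_plus hy, fun hGy => ?_⟩)
    (fun B hB hkey y hy => ⟨atomVars_subset_plus hB (fun z hz => (hkey z hz).1) hy,
      fun hGy => ?_⟩) hx
  · obtain ⟨hyG, hG, A, hGA, hyA⟩ := attacksVar_iff.1 hGy
    exact attacks_iff.2 ⟨hne.symm, hG, hGA.tail
      (witnessStep_of_mem hF hyA (Finset.subset_union_left hy) hyG)⟩
  · obtain ⟨hyG, hG, A, hGA, hyA⟩ := attacksVar_iff.1 hGy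
    obtain ⟨-, hBq⟩ := Finset.mem_erase.1 hB
    have hBG : B ≠ G := by
      rintro rfl
      obtain ⟨z, hz, hzF⟩ := exists_mem_atomVars_not_mem_plus_of_attacks hFG
      exact hzF (atomVars_subset_plus hB (fun w hw => (hkey w hw).1) hz)
    obtain ⟨z, hz, hzG⟩ : ∃ z ∈ keyVars B, z ∉ plus q G := by
      by_contra! hsub
      exact hyG (atomVars_subset_plus (Finset.mem_erase.2 ⟨hBG, hBq⟩) hsub hy)
    exact (hkey z hz).2 (attacksVar_of_reflTransGen hG
      (hGA.tail (witnessStep_of_mem hBq hyA hy hyG)) (Finset.subset_union_left hz) hzG)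

theorem reflTransGen_or_attacksVar_mem_plus (hG : G ∈ q) {A : Atom}
    (hGA : Relation.ReflTransGen (WitnessStep q G) G A) :
    Relation.ReflTransGen (WitnessStep q F) G A ∨ ∃ x ∈ plus q F, AttacksVar q G x := by
  induction hGA with
  | refl => exact .inl .refl
  | @tail A B hGA hAB ih =>
    refine ih.elim (fun hGA' => ?_) .inr
    obtain ⟨hB, hstep⟩ := hAB
    obtain ⟨x, hx, hxG⟩ := Set.not_subset.1 hstep
    obtain ⟨hxA, hxB⟩ := Finset.mem_inter.1 hx
    by_cases hxF : x ∈ plus q F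
    · exact .inr ⟨x, hxF, attacksVar_of_reflTransGen hG hGA hxA hxG⟩
    · exact .inl (hGA'.tail (witnessStep_of_mem hB hxA hxB hxF))

theorem attacks_or_attacks {H : Atom} (hFG : Attacks q F G) (hGH : Attacks q G H) :
    Attacks q F H ∨ Attacks q G F := by
  by_cases hFH : F = H
  · exact .inr (hFH ▸ hGH)
  obtain ⟨-, hF, hFG'⟩ := attacks_iff.1 hFG
  obtain ⟨-, hG, hGH'⟩ := attacks_iff.1 hGH
  rcases reflTransGen_or_attacksVar_mem_plus hG hGH' with hGH'' | ⟨x, hx, hGx⟩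
  · exact .inl (attacks_iff.2 ⟨hFH, hF, hFG'.trans hGH''⟩)
  · exact .inr (attacks_of_attacksVar_of_mem_plus hFG hx hGx)

end Witness

theorem cycle_implies_two_cycle_general (q : Finset Atom)
    (h : ∃ F, Relation.TransGen (Attacks q) F F) :
    ∃ F G, F ≠ G ∧ Attacks q F G ∧ Attacks q G F := by
  obtain ⟨F, hF⟩ := h
  obtain ⟨F, G, hFG, hGF⟩ :=
    exists_rel_and_rel_of_transGen_self (r := Attacks q) attacks_or_attacks hF
  exact ⟨F, G, hFG.1, hFG, hGF⟩

/-- If the attack graph of `q` contains a directed cycle, then it contains a cycle of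
length two. -/
theorem cycle_implies_two_cycle (q : Finset Atom) (hq : SJF q)
    (h : ∃ F, Relation.TransGen (Attacks q) F F) :
    ∃ F G, F ≠ G ∧ Attacks q F G ∧ Attacks q G F :=
  cycle_implies_two_cycle_general q h
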